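/- Let D be a nonempty finite set (the sentences containing a fixed word w), let A : D → Bool be a labeling, let n = |D|, n₁ = |{s ∈ D : A(s) = true}|, and let p = n₁ / n be the word-attribute score of w. For each s ∈ D let a(s) ≥ 0 be the attribute score of the context of w in s and r(s) the attribute score of the replacement word, and define the treatment effect under the max attribute model as TE(s) = max(p, a(s)) − max(r(s), a(s)). Assume (Assumption 1) 0 ≤ r(s) ≤ a(s) for all s ∈ D, and (Assumption 2, spurious correlate) p ≤ a(s) for every s ∈ D with A(s) = true. Then ATE(w) = (1/n) · Σ_{s ∈ D} TE(s) satisfies ATE(w) ≤ p · (1 − p) ≤ 1/4. -/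
import Mathlib


/-- `D` is a nonempty finite set of sentences containing a fixed word `w`, labeled by
`A : D → Bool`. With `n = |D|`, `n₁ = |{s : A s = true}|` and word-attribute score
`p = n₁ / n`, let `a s ≥ 0` be the context attribute score and `r s` the replacement
word's score in sentence `s`. Under the max attribute model the treatment effect is
`TE s = max(p, a s) − max(r s, a s)`. Assuming `0 ≤ r s ≤ a s` for all `s`
(Assumption 1) and `p ≤ a s` whenever `A s = true` (Assumption 2, spurious
correlate), the ATE `(1/n) · Σ_s TE s` satisfies `ATE(w) ≤ p·(1 − p) ≤ 1/4`. -/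
theorem ate_le_p_one_sub_p_le_quarter {D : Type*} [Fintype D] [Nonempty D]
    (A : D → Bool) (a r : D → ℝ) (p : ℝ)
    (hp : p = ((Finset.univ.filter fun s : D => A s = true).card : ℝ) /
      (Fintype.card D : ℝ))
    (h1 : ∀ s : D, 0 ≤ r s ∧ r s ≤ a s)
    (h2 : ∀ s : D, A s = true → p ≤ a s) :
    (1 / (Fintype.card D : ℝ)) * ∑ s : D, (max p (a s) - max (r s) (a s)) ≤
        p * (1 - p) ∧ p * (1 - p) ≤ 1 / 4 := by
  set n₁ := (Finset.univ.filter fun s : D => A s = true).card with hn₁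
  have hnpos : 0 < Fintype.card D := Fintype.card_pos
  have hn : (0 : ℝ) < (Fintype.card D : ℝ) := by exact_mod_cast hnpos
  have hp0 : 0 ≤ p := by rw [hp]; positivity
  have hTE : ∀ s : D, max p (a s) - max (r s) (a s) ≤ if A s then 0 else p := by
    intro s
    obtain ⟨hr0, hra⟩ := h1 s
    have ha0 : 0 ≤ a s := le_trans hr0 hra
    rw [max_eq_right hra]
    by_cases h : A s
    · rw [if_pos h, max_eq_right (h2 s h)]; linarith
    · rw [if_neg h]
      rcases le_total p (a s) with hh | hh
      · rw [max_eq_right hh]; linarith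
      · rw [max_eq_left hh]; linarith
  have hsum : ∑ s : D, (max p (a s) - max (r s) (a s)) ≤
      p * ((Fintype.card D : ℝ) - n₁) := by
    calc ∑ s : D, (max p (a s) - max (r s) (a s))
        ≤ ∑ s : D, (if A s then (0:ℝ) else p) := Finset.sum_le_sum fun s _ => hTE s
      _ = p * ((Fintype.card D : ℝ) - n₁) := by
          rw [Finset.sum_ite, Finset.sum_const, Finset.sum_const, smul_zero, zero_add,
            nsmul_eq_mul]
          have hcard : (Finset.univ.filter fun s : D => ¬ A s = true).card
              = Fintype.card D - n₁ := by
            have := Finset.card_filter_add_card_filter_not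
              (s := (Finset.univ : Finset D)) (p := fun s : D => A s = true)
            rw [Finset.card_univ] at this
            omega
          have hle : n₁ ≤ Fintype.card D := Finset.card_filter_le _ _
          rw [hcard]
          push_cast [Nat.cast_sub hle]
          try ring
  constructor
  · have key : p * ((Fintype.card D : ℝ) - n₁) / (Fintype.card D : ℝ) = p * (1 - p) := by
      rw [hp]; field_simp; try ring
    rw [one_div, inv_mul_eq_div, div_le_iff₀ hn, ← key]
    rw [div_mul_cancel₀ _ (ne_of_gt hn)]
    exact hsum
  · nlinarith [sq_nonneg (p - 1/2)]
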